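/- Let r ≥ 3, k ≥ 1, p ≥ 0, ℓ_1, …, ℓ_k ≥ 5, and t_1, …, t_p ≥ 2 (when p ≥ 1) be integers, set t = Σ_{i=1}^{k} ⌊(ℓ_i+1)/2⌋ + p − 1, and let n ≥ t. For each i ∈ {1,…,k} let Q_i be either P^r_{ℓ_i} or C^r_{ℓ_i}. Then the r-graph S_{n,t}^r contains no subhypergraph isomorphic to Q_1 ∪ ⋯ ∪ Q_k ∪ S^r_{t_1} ∪ ⋯ ∪ S^r_{t_p}. -/

import Mathlib

/-!
Every hyperedge of `S_{n,t}^r` meets the `t` special vertices, so a copy of `H` in it pulls them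
back to a vertex cover of `H` with at most `t` vertices. On the other hand covering numbers add
over vertex-disjoint unions, a star expansion needs one cover vertex, and an expansion of a graph
of maximum degree 2 with `ℓ` edges again has maximum degree 2, so double counting forces at least
`⌈ℓ/2⌉` cover vertices. Hence `H` needs `Σ ⌊(ℓ_i + 1)/2⌋ + p = t + 1` cover vertices.
-/

open Finset

/-- A hypergraph (with vertices drawn from `ℕ`) given by its finite set of hyperedges. -/
abbrev HG : Type := Finset (Finset ℕ)

/-- The support (set of non-isolated vertices) of a hypergraph. -/
def hsupp (G : HG) : Finset ℕ := G.sup id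

/-- `G` is `r`-uniform: every hyperedge has exactly `r` vertices. -/
def Uniform (r : ℕ) (G : HG) : Prop := ∀ e ∈ G, e.card = r

/-- The image of a hypergraph under a relabelling of the vertices. -/
def emap (f : ℕ → ℕ) (G : HG) : HG := G.image (Finset.image f)

/-- `K` is an isomorphic copy of `H` (as hypergraphs; isolated vertices are irrelevant). -/
def IsCopy (H K : HG) : Prop :=
  ∃ f : ℕ → ℕ, Set.InjOn f ↑(hsupp H) ∧ emap f H = K

/-- `G` contains a subhypergraph isomorphic to `H`. -/
def Contains (G H : HG) : Prop := ∃ K, K ⊆ G ∧ IsCopy H K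

/-- `N(H, G)`: the number of subhypergraphs of `G` isomorphic to `H`. -/
noncomputable def copyCount (H G : HG) : ℕ :=
  Set.ncard {K : HG | K ⊆ G ∧ IsCopy H K}

/-- The generalized Turán number `ex_r(n, H, F)`: the maximum number of copies of `H`
in an `F`-free `r`-uniform hypergraph on `n` vertices. -/
noncomputable def exCount (r n : ℕ) (H F : HG) : ℕ :=
  sSup { m | ∃ G : HG, Uniform r G ∧ hsupp G ⊆ Finset.range n ∧
    ¬ Contains G F ∧ m = copyCount H G }

/-- The Turán number `ex_r(n, F)`: the maximum number of hyperedges in an `F`-free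
`r`-uniform hypergraph on `n` vertices. -/
noncomputable def exTuran (r n : ℕ) (F : HG) : ℕ :=
  sSup { m | ∃ G : HG, Uniform r G ∧ hsupp G ⊆ Finset.range n ∧
    ¬ Contains G F ∧ m = G.card }

/-- The complete `r`-graph `K_s^{(r)}` on `s` vertices. -/
def completeHG (r s : ℕ) : HG := Finset.powersetCard r (Finset.range s)

/-- The path `P_l` with `l` edges, as a 2-uniform hypergraph. -/
def pathG (l : ℕ) : HG := (Finset.range l).image (fun i => ({i, i+1} : Finset ℕ))

/-- The cycle `C_l` with `l` edges, as a 2-uniform hypergraph. -/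
def cycleG (l : ℕ) : HG := (Finset.range l).image (fun i => ({i, (i+1) % l} : Finset ℕ))

/-- The star `S_l = K_{1,l}` with `l` edges, as a 2-uniform hypergraph. -/
def starG (l : ℕ) : HG := (Finset.range l).image (fun i => ({0, i+1} : Finset ℕ))

/-- The `r`-expansion `F^r` of a graph `F`: insert `r - 2` new distinct vertices into each
edge of `F`, the new vertices being distinct across edges and disjoint from `V(F)`. -/
def expansion (r : ℕ) (F : HG) : HG :=
  F.image (fun e => e.image (fun v => Nat.pair 0 v) ∪
    (Finset.range (r-2)).image (fun j => Nat.pair 1 (Nat.pair (Encodable.encode e) j)))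

/-- The vertex-disjoint union of the hypergraphs `H 0, …, H (k-1)`. -/
def hIUnion (k : ℕ) (H : ℕ → HG) : HG :=
  (Finset.range k).biUnion (fun i => emap (fun v => Nat.pair i v) (H i))

/-- The vertex-disjoint union of two hypergraphs. -/
def hUnion (G H : HG) : HG := emap (fun v => 2*v) G ∪ emap (fun v => 2*v+1) H

/-- The strong chromatic number of a hypergraph (for a 2-uniform hypergraph this is
the usual chromatic number of the graph). -/
noncomputable def chromNum (G : HG) : ℕ :=
  sInf { k | ∃ c : ℕ → Fin k, ∀ e ∈ G, Set.InjOn c ↑e }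

/-- The complete balanced `l`-partite `r`-graph `T_r(n, l)` on `n` vertices. -/
def turanHG (r n l : ℕ) : HG :=
  (Finset.powersetCard r (Finset.range n)).filter
    (fun e => ∀ i ∈ e, ∀ j ∈ e, i % l = j % l → i = j)

/-- `S_{n,t}^r(n-t, l)`: take a set `U` of `t` vertices together with a disjoint copy of
`T_r(n-t, l)`, and add as hyperedges all `r`-sets meeting `U`. -/
def splitTuranHG (r n t l : ℕ) : HG :=
  (Finset.powersetCard r (Finset.range n)).filter
    (fun e => (∃ v ∈ e, v < t) ∨ ∀ i ∈ e, ∀ j ∈ e, (i - t) % l = (j - t) % l → i = j)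

/-- `S_{n,t}^r`: the `n`-vertex `r`-graph of all `r`-sets meeting a fixed set of `t` vertices. -/
def starHG (r n t : ℕ) : HG :=
  (Finset.powersetCard r (Finset.range n)).filter (fun e => ∃ v ∈ e, v < t)

/-- `F` is a member of the family `𝒦_t^r`. -/
def memFamilyK (r t : ℕ) (F : HG) : Prop :=
  Uniform r F ∧ F.card ≤ Nat.choose t 2 ∧
    ∃ S : Finset ℕ, S.card = t ∧ ∀ u ∈ S, ∀ v ∈ S, u ≠ v → ∃ e ∈ F, u ∈ e ∧ v ∈ e

/-- The maximum number of copies of `H` in an `n`-vertex `r`-graph containing no member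
of the family described by the predicate `P` as a subhypergraph. -/
noncomputable def exCountFam (r n : ℕ) (H : HG) (P : HG → Prop) : ℕ :=
  sSup { m | ∃ G : HG, Uniform r G ∧ hsupp G ⊆ Finset.range n ∧
    (∀ F : HG, P F → ¬ Contains G F) ∧ m = copyCount H G }

/-- `G` contains a Berge copy of `F`. -/
def ContainsBerge (G F : HG) : Prop :=
  ∃ f : ℕ → ℕ, Set.InjOn f ↑(hsupp F) ∧
    ∃ φ : {e : Finset ℕ // e ∈ F} → {e : Finset ℕ // e ∈ G},
      Function.Injective φ ∧ ∀ e : {e : Finset ℕ // e ∈ F}, e.1.image f ⊆ (φ e).1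

/-- `ex_s(n, Berge-F)`: the maximum number of hyperedges in an `n`-vertex `s`-graph
containing no Berge copy of `F`. -/
noncomputable def exBerge (s n : ℕ) (F : HG) : ℕ :=
  sSup { m | ∃ G : HG, Uniform s G ∧ hsupp G ⊆ Finset.range n ∧
    ¬ ContainsBerge G F ∧ m = G.card }


def Covers (C : Finset ℕ) (H : HG) : Prop := ∀ e ∈ H, ∃ v ∈ e, v ∈ C

/-- `m ≤ τ(H)`, stated without `sInf`: a hypergraph with an empty edge has no cover at all and
would otherwise get the junk covering number `0`. -/
def CoverNumberAtLeast (H : HG) (m : ℕ) : Prop := ∀ C, Covers C H → m ≤ #C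

def hdegree (H : HG) (v : ℕ) : ℕ := #(H.filter (v ∈ ·))

lemma mem_hsupp {G : HG} {e : Finset ℕ} {v : ℕ} (he : e ∈ G) (hv : v ∈ e) : v ∈ hsupp G :=
  mem_sup.mpr ⟨e, he, hv⟩

lemma hsupp_emap_subset (f : ℕ → ℕ) (G : HG) : hsupp (emap f G) ⊆ (hsupp G).image f := by
  intro w hw
  obtain ⟨_, he', hw⟩ := mem_sup.mp hw
  obtain ⟨e, he, rfl⟩ := mem_image.mp he'
  obtain ⟨v, hv, rfl⟩ := mem_image.mp hw
  exact mem_image_of_mem f (mem_hsupp he hv)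

lemma Covers.inter_hsupp {C : Finset ℕ} {G H : HG} (hC : Covers C G) (hHG : H ⊆ G) :
    Covers (C ∩ hsupp H) H := fun e he ↦ by
  obtain ⟨v, hv, hvC⟩ := hC e (hHG he)
  exact ⟨v, hv, mem_inter.mpr ⟨hvC, mem_hsupp he hv⟩⟩

namespace CoverNumberAtLeast

lemma of_nonempty {H : HG} (hH : H.Nonempty) : CoverNumberAtLeast H 1 := fun C hC ↦ by
  obtain ⟨e, he⟩ := hH
  obtain ⟨v, -, hv⟩ := hC e he
  exact card_pos.mpr ⟨v, hv⟩

lemma emap {G : HG} {m : ℕ} {f : ℕ → ℕ} (hf : f.Injective) (hG : CoverNumberAtLeast G m) :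
    CoverNumberAtLeast (emap f G) m := fun C hC ↦ by
  have hcov : Covers (C.preimage f hf.injOn) G := fun e he ↦ by
    obtain ⟨_, hw, hwC⟩ := hC (e.image f) (mem_image_of_mem _ he)
    obtain ⟨v, hv, rfl⟩ := mem_image.mp hw
    exact ⟨v, hv, mem_preimage.mpr hwC⟩
  exact (hG _ hcov).trans <|
    card_le_card_of_injOn f (fun _ hv ↦ mem_preimage.mp hv) hf.injOn

lemma union {G H : HG} {a b : ℕ} (hd : Disjoint (hsupp G) (hsupp H))
    (hG : CoverNumberAtLeast G a) (hH : CoverNumberAtLeast H b) :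
    CoverNumberAtLeast (G ∪ H) (a + b) := fun C hC ↦
  calc a + b ≤ #(C ∩ hsupp G) + #(C ∩ hsupp H) :=
        add_le_add (hG _ (hC.inter_hsupp subset_union_left))
          (hH _ (hC.inter_hsupp subset_union_right))
    _ = #(C ∩ hsupp G ∪ C ∩ hsupp H) :=
        (card_union_of_disjoint (hd.mono inter_subset_right inter_subset_right)).symm
    _ ≤ #C := card_le_card (union_subset inter_subset_left inter_subset_left)

lemma biUnion {ι : Type*} {s : Finset ι} {G : ι → HG} {m : ι → ℕ}
    (hd : (s : Set ι).PairwiseDisjoint (hsupp ∘ G)) (hG : ∀ i ∈ s, CoverNumberAtLeast (G i) (m i)) :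
    CoverNumberAtLeast (s.biUnion G) (∑ i ∈ s, m i) := fun C hC ↦
  calc ∑ i ∈ s, m i ≤ ∑ i ∈ s, #(C ∩ hsupp (G i)) :=
        sum_le_sum fun i hi ↦ hG i hi _ (hC.inter_hsupp (subset_biUnion_of_mem G hi))
    _ = #(s.biUnion fun i ↦ C ∩ hsupp (G i)) :=
        (card_biUnion fun _ hi _ hj hij ↦
          (hd hi hj hij).mono inter_subset_right inter_subset_right).symm
    _ ≤ #C := card_le_card (biUnion_subset.mpr fun _ _ ↦ inter_subset_left)

lemma hIUnion {k : ℕ} {H : ℕ → HG} {m : ℕ → ℕ} (hH : ∀ i < k, CoverNumberAtLeast (H i) (m i)) :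
    CoverNumberAtLeast (hIUnion k H) (∑ i ∈ range k, m i) := by
  refine biUnion (fun _ _ _ _ hij ↦ disjoint_left.mpr fun w hwi hwj ↦ hij ?_)
    fun i hi ↦ (hH i (mem_range.mp hi)).emap fun _ _ h ↦ (Nat.pair_eq_pair.mp h).2
  obtain ⟨u, -, rfl⟩ := mem_image.mp (hsupp_emap_subset _ _ hwi)
  obtain ⟨v, -, huv⟩ := mem_image.mp (hsupp_emap_subset _ _ hwj)
  exact (Nat.pair_eq_pair.mp huv).1.symm

lemma hUnion {G H : HG} {a b : ℕ} (hG : CoverNumberAtLeast G a) (hH : CoverNumberAtLeast H b) :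
    CoverNumberAtLeast (hUnion G H) (a + b) := by
  refine union (disjoint_left.mpr fun w hwG hwH ↦ ?_) (hG.emap fun _ _ h ↦ by omega)
    (hH.emap fun _ _ h ↦ by omega)
  obtain ⟨u, -, rfl⟩ := mem_image.mp (hsupp_emap_subset _ _ hwG)
  obtain ⟨v, -, huv⟩ := mem_image.mp (hsupp_emap_subset _ _ hwH)
  omega

end CoverNumberAtLeast

lemma card_le_mul_card_of_covers {H : HG} {C : Finset ℕ} {d : ℕ} (hC : Covers C H)
    (hdeg : ∀ v, hdegree H v ≤ d) : #H ≤ d * #C :=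
  calc #H ≤ #(C.biUnion fun v ↦ H.filter (v ∈ ·)) := card_le_card fun e he ↦ by
        obtain ⟨v, hv, hvC⟩ := hC e he
        exact mem_biUnion.mpr ⟨v, hvC, mem_filter.mpr ⟨he, hv⟩⟩
    _ ≤ ∑ v ∈ C, hdegree H v := card_biUnion_le
    _ ≤ d * #C := by simpa [mul_comm] using sum_le_sum fun v (_ : v ∈ C) ↦ hdeg v

def expandEdge (r : ℕ) (e : Finset ℕ) : Finset ℕ :=
  e.image (fun v => Nat.pair 0 v) ∪
    (Finset.range (r-2)).image (fun j => Nat.pair 1 (Nat.pair (Encodable.encode e) j))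

lemma expansion_eq_image (r : ℕ) (F : HG) : expansion r F = F.image (expandEdge r) := rfl

lemma pair_zero_mem_expandEdge {r v : ℕ} {e : Finset ℕ} :
    Nat.pair 0 v ∈ expandEdge r e ↔ v ∈ e := by
  simp [expandEdge, Nat.pair_eq_pair]

lemma encode_eq_of_mem_expandEdge {r w : ℕ} {e : Finset ℕ} (hw : w ∈ expandEdge r e)
    (hw0 : w.unpair.1 ≠ 0) : Encodable.encode e = w.unpair.2.unpair.1 := by
  rcases mem_union.mp hw with h | h
  · obtain ⟨v, -, rfl⟩ := mem_image.mp h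
    simp at hw0
  · obtain ⟨j, -, rfl⟩ := mem_image.mp h
    simp

lemma expandEdge_injective (r : ℕ) : (expandEdge r).Injective := fun e e' h ↦ by
  ext v
  rw [← pair_zero_mem_expandEdge (r := r), h, pair_zero_mem_expandEdge]

lemma card_expansion (r : ℕ) (F : HG) : #(expansion r F) = #F :=
  card_image_of_injective F (expandEdge_injective r)

lemma hdegree_expansion_le {r d : ℕ} {F : HG} (hd : 1 ≤ d) (hF : ∀ v, hdegree F v ≤ d) (w : ℕ) :
    hdegree (expansion r F) w ≤ d := by
  -- `pair 0 v` lies in the expanded edges through `v`; any other vertex determines its edge.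
  unfold hdegree at hF ⊢
  rw [expansion_eq_image, filter_image]
  refine card_image_le.trans ?_
  by_cases hw0 : w.unpair.1 = 0
  · obtain ⟨v, rfl⟩ : ∃ v, w = Nat.pair 0 v := ⟨w.unpair.2, by rw [← hw0, Nat.pair_unpair]⟩
    simpa only [pair_zero_mem_expandEdge] using hF v
  · refine le_trans (card_le_one.mpr fun e he e' he' ↦ Encodable.encode_injective ?_) hd
    rw [encode_eq_of_mem_expandEdge (mem_filter.mp he).2 hw0,
      encode_eq_of_mem_expandEdge (mem_filter.mp he').2 hw0]

lemma coverNumberAtLeast_expansion {r : ℕ} {F : HG} (hF : ∀ v, hdegree F v ≤ 2) :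
    CoverNumberAtLeast (expansion r F) ((#F + 1) / 2) := fun C hC ↦ by
  have := card_le_mul_card_of_covers hC (hdegree_expansion_le one_le_two hF)
  rw [card_expansion] at this
  omega

lemma hdegree_image_pair_le_two (s : Finset ℕ) {a b : ℕ → ℕ} (ha : Set.InjOn a s)
    (hb : Set.InjOn b s) (v : ℕ) : hdegree (s.image fun i ↦ ({a i, b i} : Finset ℕ)) v ≤ 2 := by
  unfold hdegree
  rw [filter_image]
  refine card_image_le.trans ?_
  simp only [mem_insert, mem_singleton, eq_comm (a := v)]
  have hfiber {c : ℕ → ℕ} (hc : Set.InjOn c s) : #(s.filter (c · = v)) ≤ 1 :=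
    card_le_one.mpr fun i hi j hj ↦ by
      rw [mem_filter] at hi hj
      exact hc hi.1 hj.1 (hi.2.trans hj.2.symm)
  rw [filter_or]
  exact (card_union_le _ _).trans (add_le_add (hfiber ha) (hfiber hb))

lemma add_one_mod_eq_or {i l : ℕ} (hi : i < l) :
    (i + 1) % l = i + 1 ∧ i + 1 < l ∨ (i + 1) % l = 0 ∧ i + 1 = l := by
  rcases (Nat.succ_le_of_lt hi).lt_or_eq with h | h
  · exact .inl ⟨Nat.mod_eq_of_lt h, h⟩
  · exact .inr ⟨h ▸ Nat.mod_self _, h⟩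

lemma card_pathG (l : ℕ) : #(pathG l) = l := by
  rw [pathG, card_image_of_injective _ fun i j h ↦ ?_, card_range]
  have hi : i ∈ ({j, j + 1} : Finset ℕ) := by rw [← h]; simp
  have hj : j ∈ ({i, i + 1} : Finset ℕ) := by rw [h]; simp
  simp only [mem_insert, mem_singleton] at hi hj
  omega

lemma card_cycleG {l : ℕ} (hl : 3 ≤ l) : #(cycleG l) = l := by
  rw [cycleG, card_image_of_injOn fun i hi j hj h ↦ ?_, card_range]
  have hij : i ∈ ({j, (j + 1) % l} : Finset ℕ) := by rw [← h]; simp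
  have hji : j ∈ ({i, (i + 1) % l} : Finset ℕ) := by rw [h]; simp
  simp only [mem_insert, mem_singleton] at hij hji
  rcases add_one_mod_eq_or (mem_range.mp hi) with hi' | hi' <;>
    rcases add_one_mod_eq_or (mem_range.mp hj) with hj' | hj' <;> omega

lemma hdegree_pathG_le (l v : ℕ) : hdegree (pathG l) v ≤ 2 :=
  hdegree_image_pair_le_two _ Function.injective_id.injOn (add_left_injective 1).injOn v

lemma hdegree_cycleG_le (l v : ℕ) : hdegree (cycleG l) v ≤ 2 := by
  refine hdegree_image_pair_le_two _ Function.injective_id.injOn (fun i hi j hj h ↦ ?_) v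
  rcases add_one_mod_eq_or (mem_range.mp hi) with hi' | hi' <;>
    rcases add_one_mod_eq_or (mem_range.mp hj) with hj' | hj' <;> omega

lemma exists_covers_card_le_of_contains_starHG {r n t : ℕ} {H : HG}
    (hH : Contains (starHG r n t) H) : ∃ C, Covers C H ∧ #C ≤ t := by
  classical
  obtain ⟨K, hK, f, hf, rfl⟩ := hH
  refine ⟨(hsupp H).filter (f · < t), fun e he ↦ ?_, ?_⟩
  · obtain ⟨-, w, hw, hwt⟩ := mem_filter.mp (hK (mem_image_of_mem _ he))
    obtain ⟨v, hv, rfl⟩ := mem_image.mp hw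
    exact ⟨v, hv, mem_filter.mpr ⟨mem_hsupp he hv, hwt⟩⟩
  · simpa using card_le_card_of_injOn f (fun v hv ↦ mem_range.mpr (mem_filter.mp hv).2)
      (hf.mono (filter_subset _ _))

theorem stmt19_general (r k p n : ℕ) (l tf : ℕ → ℕ) (t : ℕ) (Q : ℕ → HG)
    (hk : 1 ≤ k)
    (hl : ∀ i < k, 5 ≤ l i) (htf : ∀ j < p, 2 ≤ tf j)
    (hQ : ∀ i < k, Q i = expansion r (pathG (l i)) ∨ Q i = expansion r (cycleG (l i)))
    (ht : t = (∑ i ∈ Finset.range k, (l i + 1) / 2) + p - 1) :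
    ¬ Contains (starHG r n t)
        (hUnion (hIUnion k Q) (hIUnion p (fun j => expansion r (starG (tf j))))) := by
  intro hcontains
  obtain ⟨C, hC, hCt⟩ := exists_covers_card_le_of_contains_starHG hcontains
  have hQ_cover : CoverNumberAtLeast (hIUnion k Q) (∑ i ∈ range k, (l i + 1) / 2) :=
    CoverNumberAtLeast.hIUnion fun i hi ↦ by
      rcases hQ i hi with h | h <;> rw [h]
      · simpa only [card_pathG] using coverNumberAtLeast_expansion (hdegree_pathG_le (l i))
      · simpa only [card_cycleG (by linarith [hl i hi] : 3 ≤ l i)] using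
          coverNumberAtLeast_expansion (hdegree_cycleG_le (l i))
  have hstar_cover : CoverNumberAtLeast (hIUnion p fun j ↦ expansion r (starG (tf j)))
      (∑ j ∈ range p, 1) :=
    CoverNumberAtLeast.hIUnion fun j hj ↦ .of_nonempty <|
      ((nonempty_range_iff.mpr (by linarith [htf j hj])).image _).image _
  have hcover := hQ_cover.hUnion hstar_cover C hC
  have hQ₀ : (l 0 + 1) / 2 ≤ ∑ i ∈ range k, (l i + 1) / 2 :=
    single_le_sum (f := fun i ↦ (l i + 1) / 2) (fun _ _ ↦ Nat.zero_le _) (mem_range.mpr hk)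
  have hl₀ := hl 0 hk
  rw [sum_const, card_range, smul_eq_mul, mul_one] at hcover
  omega

/-- For `t = Σ ⌊(l i + 1)/2⌋ + p - 1` and `n ≥ t`, the `r`-graph
`S_{n,t}^r` contains no copy of `Q_1 ∪ ⋯ ∪ Q_k ∪ S^r_{t_1} ∪ ⋯ ∪ S^r_{t_p}`,
where each `Q i` is a path or cycle expansion. -/
theorem stmt19 (r k p n : ℕ) (l tf : ℕ → ℕ) (t : ℕ) (Q : ℕ → HG)
    (hr : 3 ≤ r) (hk : 1 ≤ k)
    (hl : ∀ i < k, 5 ≤ l i) (htf : ∀ j < p, 2 ≤ tf j)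
    (hQ : ∀ i < k, Q i = expansion r (pathG (l i)) ∨ Q i = expansion r (cycleG (l i)))
    (ht : t = (∑ i ∈ Finset.range k, (l i + 1) / 2) + p - 1) (hn : t ≤ n) :
    ¬ Contains (starHG r n t)
        (hUnion (hIUnion k Q) (hIUnion p (fun j => expansion r (starG (tf j))))) :=
  stmt19_general r k p n l tf t Q hk hl htf hQ ht
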